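/- There exists a constant c > 0 such that for every axis-aligned square σ of side length s and every real t with 0 < t ≤ s, the set of dyadic cells D satisfying side(D) ≥ t, D ⊆ σ, and such that no dyadic cell strictly containing D is contained in σ, has at most c·(s/t) elements. -/

import Mathlib

open Set

/-- A dyadic cell at level `level` (side length `2^level`) with lower-left corner
`(a·2^level, b·2^level)`. -/
structure DyadicCell where
  level : ℤ
  a : ℤ
  b : ℤ
deriving DecidableEq

/-- The side length of a dyadic cell. -/
noncomputable def DyadicCell.side (C : DyadicCell) : ℝ := 2 ^ C.level

/-- The dyadic cell as a subset of the plane. -/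
noncomputable def DyadicCell.toSet (C : DyadicCell) : Set (ℝ × ℝ) :=
  Set.Icc ((C.a : ℝ) * 2 ^ C.level) ((C.a + 1 : ℝ) * 2 ^ C.level) ×ˢ
    Set.Icc ((C.b : ℝ) * 2 ^ C.level) ((C.b + 1 : ℝ) * 2 ^ C.level)

/-- `5C`: the square obtained by scaling the cell `C` by a factor `5` about its center. -/
noncomputable def DyadicCell.scale5 (C : DyadicCell) : Set (ℝ × ℝ) :=
  Set.Icc ((C.a - 2 : ℝ) * 2 ^ C.level) ((C.a + 3 : ℝ) * 2 ^ C.level) ×ˢ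
    Set.Icc ((C.b - 2 : ℝ) * 2 ^ C.level) ((C.b + 3 : ℝ) * 2 ^ C.level)

/-- An axis-aligned square `[x, x+s] × [y, y+s]` of side length `s > 0`. -/
structure Square where
  x : ℝ
  y : ℝ
  s : ℝ
  s_pos : 0 < s

/-- The square as a subset of the plane. -/
noncomputable def Square.toSet (σ : Square) : Set (ℝ × ℝ) :=
  Set.Icc σ.x (σ.x + σ.s) ×ˢ Set.Icc σ.y (σ.y + σ.s)

/-- The center of a square. -/
noncomputable def Square.center (σ : Square) : ℝ × ℝ := (σ.x + σ.s / 2, σ.y + σ.s / 2)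

/-- `C` is a storing cell of `σ`: a dyadic cell of maximal side length among those that
contain the center of `σ` and are contained in `σ`. -/
def IsStoringCell (σ : Square) (C : DyadicCell) : Prop :=
  σ.center ∈ C.toSet ∧ C.toSet ⊆ σ.toSet ∧
    ∀ D : DyadicCell, σ.center ∈ D.toSet → D.toSet ⊆ σ.toSet → D.side ≤ C.side

section Aux

open Finset

private lemma geom_sum_Icc_le (l0 l1 : ℤ) :
    ∑ ℓ ∈ Finset.Icc l0 l1, ((2:ℝ)^ℓ)⁻¹ ≤ 2 * ((2:ℝ)^l0)⁻¹ := by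
  have key : ∑ ℓ ∈ Finset.Icc l0 l1, ((2:ℝ)^ℓ)⁻¹
      = ∑ k ∈ Finset.range ((l1 + 1 - l0).toNat), ((2:ℝ)^(l0 + (k:ℤ)))⁻¹ := by
    refine Finset.sum_nbij' (fun ℓ => (ℓ - l0).toNat) (fun k => l0 + (k:ℤ)) ?_ ?_ ?_ ?_ ?_
    · intro a ha; simp only [Finset.mem_Icc] at ha; simp only [Finset.mem_range]; omega
    · intro a ha; simp only [Finset.mem_range] at ha; simp only [Finset.mem_Icc]; omega
    · intro a ha; simp only [Finset.mem_Icc] at ha; omega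
    · intro a ha; simp only [Finset.mem_range] at ha; omega
    · intro a ha; simp only [Finset.mem_Icc] at ha
      have h : l0 + (((a - l0).toNat : ℤ)) = a := by omega
      rw [h]
  rw [key]
  have h2 : ∀ k : ℕ, ((2:ℝ)^(l0 + (k:ℤ)))⁻¹ = ((2:ℝ)^l0)⁻¹ * (1/2:ℝ)^k := by
    intro k
    rw [zpow_add₀ (two_ne_zero), mul_inv, zpow_natCast, one_div, inv_pow]
  calc ∑ k ∈ Finset.range ((l1 + 1 - l0).toNat), ((2:ℝ)^(l0 + (k:ℤ)))⁻¹
      = ((2:ℝ)^l0)⁻¹ * ∑ k ∈ Finset.range ((l1 + 1 - l0).toNat), (1/2:ℝ)^k := by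
        rw [Finset.mul_sum]; exact Finset.sum_congr rfl (fun k _ => h2 k)
    _ ≤ ((2:ℝ)^l0)⁻¹ * 2 := by
        have := sum_geometric_two_le ((l1 + 1 - l0).toNat)
        have hp : (0:ℝ) ≤ ((2:ℝ)^l0)⁻¹ := by positivity
        nlinarith
    _ = 2 * ((2:ℝ)^l0)⁻¹ := by ring

private lemma cell_subset_iff (σ : Square) (C : DyadicCell) :
    C.toSet ⊆ σ.toSet ↔
      σ.x ≤ (C.a : ℝ) * 2 ^ C.level ∧ (C.a + 1 : ℝ) * 2 ^ C.level ≤ σ.x + σ.s ∧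
      σ.y ≤ (C.b : ℝ) * 2 ^ C.level ∧ (C.b + 1 : ℝ) * 2 ^ C.level ≤ σ.y + σ.s := by
  have hpow : (0:ℝ) < 2 ^ C.level := by positivity
  have hxI : (C.a : ℝ) * 2 ^ C.level ≤ (C.a + 1 : ℝ) * 2 ^ C.level := by nlinarith
  have hyI : (C.b : ℝ) * 2 ^ C.level ≤ (C.b + 1 : ℝ) * 2 ^ C.level := by nlinarith
  unfold DyadicCell.toSet Square.toSet
  rw [Set.prod_subset_prod_iff]
  constructor
  · rintro (⟨h1, h2⟩ | h | h)
    · rw [Set.Icc_subset_Icc_iff hxI] at h1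
      rw [Set.Icc_subset_Icc_iff hyI] at h2
      tauto
    · exact absurd h (by rw [Set.Icc_eq_empty_iff]; exact fun hc => hc hxI)
    · exact absurd h (by rw [Set.Icc_eq_empty_iff]; exact fun hc => hc hyI)
  · rintro ⟨h1, h2, h3, h4⟩
    left
    exact ⟨(Set.Icc_subset_Icc_iff hxI).mpr ⟨h1, h2⟩, (Set.Icc_subset_Icc_iff hyI).mpr ⟨h3, h4⟩⟩

/-- the dyadic parent of a cell -/
def DyadicCell.parent (C : DyadicCell) : DyadicCell := ⟨C.level + 1, C.a / 2, C.b / 2⟩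

private lemma ssubset_parent (C : DyadicCell) : C.toSet ⊂ C.parent.toSet := by
  obtain ⟨ℓ, a, b⟩ := C
  have hpow : (0:ℝ) < 2 ^ ℓ := by positivity
  have hqa : 2 * (a/2) ≤ a ∧ a ≤ 2 * (a/2) + 1 := by omega
  have hqb : 2 * (b/2) ≤ b ∧ b ≤ 2 * (b/2) + 1 := by omega
  have hpow2 : ((2:ℝ) ^ (ℓ+1)) = 2 ^ ℓ * 2 := zpow_add_one₀ two_ne_zero ℓ
  rw [Set.ssubset_def]
  constructor
  · unfold DyadicCell.parent DyadicCell.toSet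
    simp only
    apply Set.prod_mono <;> apply Set.Icc_subset_Icc
    · rw [hpow2]
      have : ((2 * (a/2) : ℤ) : ℝ) ≤ (a:ℝ) := by exact_mod_cast hqa.1
      push_cast at this ⊢; nlinarith
    · rw [hpow2]
      have : ((a:ℝ)) ≤ 2 * ((a/2 : ℤ) : ℝ) + 1 := by exact_mod_cast hqa.2
      push_cast at this ⊢; nlinarith
    · rw [hpow2]
      have : ((2 * (b/2) : ℤ) : ℝ) ≤ (b:ℝ) := by exact_mod_cast hqb.1
      push_cast at this ⊢; nlinarith
    · rw [hpow2]
      have : ((b:ℝ)) ≤ 2 * ((b/2 : ℤ) : ℝ) + 1 := by exact_mod_cast hqb.2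
      push_cast at this ⊢; nlinarith
  · intro hsup
    unfold DyadicCell.parent DyadicCell.toSet at hsup
    simp only at hsup
    set qa : ℤ := a / 2
    set qb : ℤ := b / 2
    have hyb : ((qb:ℝ)) * 2 ^ (ℓ+1) ≤ ((qb:ℝ)+1) * 2 ^ (ℓ+1) := by
      have : (0:ℝ) < 2 ^ (ℓ+1) := by positivity
      nlinarith
    have hp1 : ((qa:ℝ) * 2 ^ (ℓ+1), (qb:ℝ) * 2 ^ (ℓ+1))
        ∈ Set.Icc ((qa:ℝ) * 2 ^ (ℓ+1)) ((qa+1:ℝ) * 2 ^ (ℓ+1)) ×ˢ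
          Set.Icc ((qb:ℝ) * 2 ^ (ℓ+1)) ((qb+1:ℝ) * 2 ^ (ℓ+1)) := by
      have hxa : ((qa:ℝ)) * 2 ^ (ℓ+1) ≤ ((qa:ℝ)+1) * 2 ^ (ℓ+1) := by
        have : (0:ℝ) < 2 ^ (ℓ+1) := by positivity
        nlinarith
      exact ⟨⟨le_rfl, hxa⟩, le_rfl, hyb⟩
    have hp2 : (((qa:ℝ)+1) * 2 ^ (ℓ+1), (qb:ℝ) * 2 ^ (ℓ+1))
        ∈ Set.Icc ((qa:ℝ) * 2 ^ (ℓ+1)) ((qa+1:ℝ) * 2 ^ (ℓ+1)) ×ˢ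
          Set.Icc ((qb:ℝ) * 2 ^ (ℓ+1)) ((qb+1:ℝ) * 2 ^ (ℓ+1)) := by
      have hxa : ((qa:ℝ)) * 2 ^ (ℓ+1) ≤ ((qa:ℝ)+1) * 2 ^ (ℓ+1) := by
        have : (0:ℝ) < 2 ^ (ℓ+1) := by positivity
        nlinarith
      exact ⟨⟨hxa, le_rfl⟩, le_rfl, hyb⟩
    have h1 := hsup hp1
    have h2 := hsup hp2
    obtain ⟨⟨h1a, _⟩, _⟩ := h1
    obtain ⟨⟨_, h2a⟩, _⟩ := h2
    rw [hpow2] at h1a h2a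
    push_cast at h1a h2a
    nlinarith

end Aux
section Main

/-- candidate positions at level ℓ -/
noncomputable def auxS (x y s : ℝ) (ℓ : ℤ) : Finset (ℤ × ℤ) :=
  ({⌈x / 2^ℓ⌉, ⌊(x+s) / 2^ℓ⌋ - 1} : Finset ℤ) ×ˢ Finset.Icc ⌈y / 2^ℓ⌉ (⌊(y+s) / 2^ℓ⌋ - 1) ∪
    Finset.Icc ⌈x / 2^ℓ⌉ (⌊(x+s) / 2^ℓ⌋ - 1) ×ˢ ({⌈y / 2^ℓ⌉, ⌊(y+s) / 2^ℓ⌋ - 1} : Finset ℤ)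

private lemma card_Icc_aux_le (u s : ℝ) (hs : 0 ≤ s) (ℓ : ℤ) :
    ((Finset.Icc ⌈u / 2^ℓ⌉ (⌊(u+s)/2^ℓ⌋ - 1)).card : ℝ) ≤ s * ((2:ℝ)^ℓ)⁻¹ := by
  have hpow : (0:ℝ) < (2:ℝ)^ℓ := by positivity
  rw [Int.card_Icc]
  have h1 : u / 2^ℓ ≤ (⌈u / 2^ℓ⌉ : ℝ) := Int.le_ceil _
  have h2 : ((⌊(u+s)/2^ℓ⌋ : ℤ) : ℝ) ≤ (u+s)/2^ℓ := Int.floor_le _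
  have hdiff : (u+s)/2^ℓ - u/2^ℓ = s * ((2:ℝ)^ℓ)⁻¹ := by
    field_simp
    ring
  have hz : ((⌊(u+s)/2^ℓ⌋ : ℤ) : ℝ) - 1 + 1 - ((⌈u / 2^ℓ⌉ : ℤ) : ℝ) ≤ s * ((2:ℝ)^ℓ)⁻¹ := by
    linarith
  have hmax : (((⌊(u+s)/2^ℓ⌋ - 1 + 1 - ⌈u / 2^ℓ⌉ : ℤ).toNat : ℤ) : ℝ) ≤ s * ((2:ℝ)^ℓ)⁻¹ := by
    rw [Int.toNat_eq_max]
    push_cast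
    exact max_le hz (by positivity)
  exact_mod_cast hmax

private lemma card_auxS_le (x y s : ℝ) (hs : 0 ≤ s) (ℓ : ℤ) :
    ((auxS x y s ℓ).card : ℝ) ≤ 4 * s * ((2:ℝ)^ℓ)⁻¹ := by
  have hcx := card_Icc_aux_le x s hs ℓ
  have hcy := card_Icc_aux_le y s hs ℓ
  have hpair : ∀ a b : ℤ, (({a, b} : Finset ℤ)).card ≤ 2 := by
    intro a b
    exact (Finset.card_insert_le a {b}).trans (by simp)
  have h1 : (auxS x y s ℓ).card ≤
      (({⌈x / 2^ℓ⌉, ⌊(x+s) / 2^ℓ⌋ - 1} : Finset ℤ) ×ˢ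
        Finset.Icc ⌈y / 2^ℓ⌉ (⌊(y+s) / 2^ℓ⌋ - 1)).card +
      (Finset.Icc ⌈x / 2^ℓ⌉ (⌊(x+s) / 2^ℓ⌋ - 1) ×ˢ
        ({⌈y / 2^ℓ⌉, ⌊(y+s) / 2^ℓ⌋ - 1} : Finset ℤ)).card := Finset.card_union_le _ _
  rw [Finset.card_product, Finset.card_product] at h1
  have h2 : (auxS x y s ℓ).card ≤
      2 * (Finset.Icc ⌈y / 2^ℓ⌉ (⌊(y+s) / 2^ℓ⌋ - 1)).card +
      (Finset.Icc ⌈x / 2^ℓ⌉ (⌊(x+s) / 2^ℓ⌋ - 1)).card * 2 := by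
    have := hpair ⌈x / 2^ℓ⌉ (⌊(x+s) / 2^ℓ⌋ - 1)
    have := hpair ⌈y / 2^ℓ⌉ (⌊(y+s) / 2^ℓ⌋ - 1)
    nlinarith [h1]
  have h3 : ((auxS x y s ℓ).card : ℝ) ≤
      2 * ((Finset.Icc ⌈y / 2^ℓ⌉ (⌊(y+s) / 2^ℓ⌋ - 1)).card : ℝ) +
      ((Finset.Icc ⌈x / 2^ℓ⌉ (⌊(x+s) / 2^ℓ⌋ - 1)).card : ℝ) * 2 := by
    exact_mod_cast h2
  linarith

private lemma mem_auxS (σ : Square) (D : DyadicCell)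
    (hsub : D.toSet ⊆ σ.toSet)
    (hnp : ¬ D.parent.toSet ⊆ σ.toSet) :
    (D.a, D.b) ∈ auxS σ.x σ.y σ.s D.level := by
  obtain ⟨ℓ, a, b⟩ := D
  set x := σ.x
  set y := σ.y
  set s := σ.s
  have hpow : (0:ℝ) < (2:ℝ)^ℓ := by positivity
  have hpow2 : ((2:ℝ) ^ (ℓ+1)) = 2 ^ ℓ * 2 := zpow_add_one₀ two_ne_zero ℓ
  rw [cell_subset_iff] at hsub
  obtain ⟨hax, hax', hby, hby'⟩ := hsub
  simp only at hax hax' hby hby'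
  rw [cell_subset_iff] at hnp
  simp only [DyadicCell.parent] at hnp
  -- integer facts about halves
  have hA1 : 2 * ((a/2 : ℤ) : ℝ) ≤ (a:ℝ) := by exact_mod_cast (by omega : (2 * (a/2) : ℤ) ≤ a)
  have hA2 : (a:ℝ) ≤ 2 * ((a/2 : ℤ) : ℝ) + 1 := by
    exact_mod_cast (by omega : (a:ℤ) ≤ 2 * (a/2) + 1)
  have hB1 : 2 * ((b/2 : ℤ) : ℝ) ≤ (b:ℝ) := by exact_mod_cast (by omega : (2 * (b/2) : ℤ) ≤ b)
  have hB2 : (b:ℝ) ≤ 2 * ((b/2 : ℤ) : ℝ) + 1 := by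
    exact_mod_cast (by omega : (b:ℤ) ≤ 2 * (b/2) + 1)
  -- always-valid bounds
  have hcl : ⌈x / 2^ℓ⌉ ≤ a := Int.ceil_le.mpr ((div_le_iff₀ hpow).mpr hax)
  have hcr : a ≤ ⌊(x+s) / 2^ℓ⌋ - 1 := by
    have : (a:ℤ) + 1 ≤ ⌊(x+s) / 2^ℓ⌋ := by
      apply Int.le_floor.mpr
      rw [le_div_iff₀ hpow]
      push_cast
      linarith
    omega
  have hdb : ⌈y / 2^ℓ⌉ ≤ b := Int.ceil_le.mpr ((div_le_iff₀ hpow).mpr hby)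
  have hdt : b ≤ ⌊(y+s) / 2^ℓ⌋ - 1 := by
    have : (b:ℤ) + 1 ≤ ⌊(y+s) / 2^ℓ⌋ := by
      apply Int.le_floor.mpr
      rw [le_div_iff₀ hpow]
      push_cast
      linarith
    omega
  -- the pinned coordinate
  have hpin : a = ⌈x / 2^ℓ⌉ ∨ a = ⌊(x+s) / 2^ℓ⌋ - 1 ∨ b = ⌈y / 2^ℓ⌉ ∨ b = ⌊(y+s) / 2^ℓ⌋ - 1 := by
    rcases not_and_or.mp hnp with hc | hnp'
    · -- parent exits left
      left
      push_neg at hc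
      rw [hpow2] at hc
      have h1 : ((a:ℝ) - 1) * 2^ℓ < x := by nlinarith
      symm
      rw [Int.ceil_eq_iff]
      constructor
      · push_cast
        rw [lt_div_iff₀ hpow]
        linarith
      · rw [div_le_iff₀ hpow]
        exact hax
    rcases not_and_or.mp hnp' with hc | hnp''
    · -- parent exits right
      right; left
      push_neg at hc
      rw [hpow2] at hc
      have h1 : x + s < ((a:ℝ) + 2) * 2^ℓ := by push_cast at hc; nlinarith
      have : ⌊(x+s) / 2^ℓ⌋ = a + 1 := by
        rw [Int.floor_eq_iff]
        constructor
        · push_cast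
          rw [le_div_iff₀ hpow]
          linarith
        · push_cast
          rw [div_lt_iff₀ hpow]
          linarith
      omega
    rcases not_and_or.mp hnp'' with hc | hc
    · -- parent exits bottom
      right; right; left
      push_neg at hc
      rw [hpow2] at hc
      have h1 : ((b:ℝ) - 1) * 2^ℓ < y := by nlinarith
      symm
      rw [Int.ceil_eq_iff]
      constructor
      · push_cast
        rw [lt_div_iff₀ hpow]
        linarith
      · rw [div_le_iff₀ hpow]
        exact hby
    · -- parent exits top
      right; right; right
      push_neg at hc
      rw [hpow2] at hc
      have h1 : y + s < ((b:ℝ) + 2) * 2^ℓ := by push_cast at hc; nlinarith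
      have : ⌊(y+s) / 2^ℓ⌋ = b + 1 := by
        rw [Int.floor_eq_iff]
        constructor
        · push_cast
          rw [le_div_iff₀ hpow]
          linarith
        · push_cast
          rw [div_lt_iff₀ hpow]
          linarith
      omega
  simp only [auxS, Finset.mem_union, Finset.mem_product, Finset.mem_insert,
    Finset.mem_singleton, Finset.mem_Icc]
  rcases hpin with h | h | h | h
  · exact Or.inl ⟨Or.inl h, hdb, hdt⟩
  · exact Or.inl ⟨Or.inr h, hdb, hdt⟩
  · exact Or.inr ⟨⟨hcl, hcr⟩, Or.inl h⟩
  · exact Or.inr ⟨⟨hcl, hcr⟩, Or.inr h⟩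

end Main
theorem statement4 : ∃ c : ℝ, 0 < c ∧
    ∀ (σ : Square) (t : ℝ), 0 < t → t ≤ σ.s →
      letI A : Set DyadicCell := {D | t ≤ D.side ∧ D.toSet ⊆ σ.toSet ∧
        ¬ ∃ D' : DyadicCell, D.toSet ⊂ D'.toSet ∧ D'.toSet ⊆ σ.toSet}
      A.Finite ∧ (A.ncard : ℝ) ≤ c * (σ.s / t) := by
  refine ⟨8, by norm_num, ?_⟩
  intro σ t ht hts
  have hs : 0 < σ.s := σ.s_pos
  set x := σ.x with hxdef
  set y := σ.y with hydef
  set s := σ.s with hsdef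
  set l0 : ℤ := ⌈Real.logb 2 t⌉ with hl0
  set l1 : ℤ := ⌊Real.logb 2 s⌋ with hl1
  set T : Finset (ℤ × ℤ × ℤ) :=
    (Finset.Icc l0 l1).biUnion (fun ℓ => ({ℓ} : Finset ℤ) ×ˢ auxS x y s ℓ) with hT
  set A : Set DyadicCell := {D | t ≤ D.side ∧ D.toSet ⊆ σ.toSet ∧
      ¬ ∃ D' : DyadicCell, D.toSet ⊂ D'.toSet ∧ D'.toSet ⊆ σ.toSet} with hA
  have hmem : ∀ D ∈ A, (D.level, D.a, D.b) ∈ T := by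
    intro D hD
    obtain ⟨hside, hsub, hmax⟩ := hD
    have hpow : (0:ℝ) < 2 ^ D.level := by positivity
    have hnp : ¬ D.parent.toSet ⊆ σ.toSet := fun hc => hmax ⟨D.parent, ssubset_parent D, hc⟩
    have hS := mem_auxS σ D hsub hnp
    have hcs := (cell_subset_iff σ D).mp hsub
    have hle_s : (2:ℝ) ^ D.level ≤ s := by nlinarith [hcs.1, hcs.2.1]
    have ht_le : t ≤ (2:ℝ) ^ D.level := hside
    have hL0 : l0 ≤ D.level := by
      rw [hl0]
      apply Int.ceil_le.mpr
      rw [Real.logb_le_iff_le_rpow one_lt_two ht, Real.rpow_intCast]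
      exact ht_le
    have hL1 : D.level ≤ l1 := by
      rw [hl1]
      apply Int.le_floor.mpr
      rw [Real.le_logb_iff_rpow_le one_lt_two hs, Real.rpow_intCast]
      exact hle_s
    rw [hT]
    exact Finset.mem_biUnion.mpr ⟨D.level, Finset.mem_Icc.mpr ⟨hL0, hL1⟩,
      Finset.mem_product.mpr ⟨Finset.mem_singleton_self _, hS⟩⟩
  have hA_sub : A ⊆ (fun p : ℤ × ℤ × ℤ => DyadicCell.mk p.1 p.2.1 p.2.2) '' ↑T := by
    intro D hD
    exact ⟨(D.level, D.a, D.b), hmem D hD, rfl⟩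
  have hfin : A.Finite := ((T.finite_toSet).image _).subset hA_sub
  refine ⟨hfin, ?_⟩
  have hcard1 : A.ncard ≤ T.card := by
    calc A.ncard ≤ ((fun p : ℤ × ℤ × ℤ => DyadicCell.mk p.1 p.2.1 p.2.2) '' ↑T).ncard :=
          Set.ncard_le_ncard hA_sub ((T.finite_toSet).image _)
      _ ≤ (↑T : Set (ℤ × ℤ × ℤ)).ncard := Set.ncard_image_le T.finite_toSet
      _ = T.card := Set.ncard_coe_finset T
  have hTcard : (T.card : ℝ) ≤ ∑ ℓ ∈ Finset.Icc l0 l1, 4 * s * ((2:ℝ)^ℓ)⁻¹ := by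
    have h1 : T.card ≤ ∑ ℓ ∈ Finset.Icc l0 l1, (({ℓ} : Finset ℤ) ×ˢ auxS x y s ℓ).card :=
      Finset.card_biUnion_le
    have h1' : (T.card : ℝ) ≤
        ∑ ℓ ∈ Finset.Icc l0 l1, ((({ℓ} : Finset ℤ) ×ˢ auxS x y s ℓ).card : ℝ) := by
      exact_mod_cast h1
    refine h1'.trans (Finset.sum_le_sum fun ℓ _ => ?_)
    rw [Finset.card_product, Finset.card_singleton, one_mul]
    exact card_auxS_le x y s hs.le ℓ
  have hgeo := geom_sum_Icc_le l0 l1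
  have hsum : ∑ ℓ ∈ Finset.Icc l0 l1, 4 * s * ((2:ℝ)^ℓ)⁻¹ ≤ 8 * s * ((2:ℝ)^l0)⁻¹ := by
    rw [← Finset.mul_sum]
    nlinarith [hs.le]
  have hl0t : t ≤ (2:ℝ) ^ l0 := by
    have h := Int.le_ceil (Real.logb 2 t)
    calc t = (2:ℝ) ^ (Real.logb 2 t) := (Real.rpow_logb (by norm_num) (by norm_num) ht).symm
      _ ≤ (2:ℝ) ^ ((l0 : ℤ) : ℝ) := Real.rpow_le_rpow_of_exponent_le one_le_two h
      _ = (2:ℝ) ^ l0 := Real.rpow_intCast 2 l0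
  have hpl0 : (0:ℝ) < (2:ℝ) ^ l0 := by positivity
  have hinv : ((2:ℝ) ^ l0)⁻¹ ≤ t⁻¹ := by
    apply inv_anti₀ ht hl0t
  calc (A.ncard : ℝ) ≤ (T.card : ℝ) := by exact_mod_cast hcard1
    _ ≤ ∑ ℓ ∈ Finset.Icc l0 l1, 4 * s * ((2:ℝ)^ℓ)⁻¹ := hTcard
    _ ≤ 8 * s * ((2:ℝ)^l0)⁻¹ := hsum
    _ ≤ 8 * s * t⁻¹ := by nlinarith [hs.le]
    _ = 8 * (s / t) := by ring
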